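/- Let h_θ(x) = 1[⟨θ, x⟩ > 0] be a linear threshold classifier and let θ₁, θ₂ be nonzero vectors with angle φ between them. Then the set of points x in the unit ball of ℝ^d on which h_{θ₁}(x) ≠ h_{θ₂}(x) has Lebesgue measure equal to (φ/π)·V_d, where V_d is the volume of the unit d-ball. -/

import Mathlib

open MeasureTheory Metric
open scoped RealInnerProductSpace ENNReal

namespace Stmt10Aux

variable {d : ℕ}

/-- The disagreement region of two homogeneous halfspaces inside the unit ball. -/
def Dset (u v : EuclideanSpace ℝ (Fin d)) : Set (EuclideanSpace ℝ (Fin d)) :=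
  {x | ‖x‖ ≤ 1 ∧ ¬(((0:ℝ) < ⟪u, x⟫) ↔ ((0:ℝ) < ⟪v, x⟫))}

lemma measurableSet_Dset (u v : EuclideanSpace ℝ (Fin d)) : MeasurableSet (Dset u v) := by
  have hA : ∀ w : EuclideanSpace ℝ (Fin d),
      MeasurableSet {x : EuclideanSpace ℝ (Fin d) | (0:ℝ) < ⟪w, x⟫} := fun w =>
    (isOpen_lt continuous_const (continuous_const.inner continuous_id)).measurableSet
  have hB : MeasurableSet {x : EuclideanSpace ℝ (Fin d) | ‖x‖ ≤ 1} :=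
    (isClosed_le continuous_norm continuous_const).measurableSet
  have : Dset u v = {x : EuclideanSpace ℝ (Fin d) | ‖x‖ ≤ 1} ∩
      (({x | (0:ℝ) < ⟪u, x⟫} ∩ {x | (0:ℝ) < ⟪v, x⟫}ᶜ) ∪
       ({x | (0:ℝ) < ⟪u, x⟫}ᶜ ∩ {x | (0:ℝ) < ⟪v, x⟫})) := by
    ext x
    simp only [Dset, Set.mem_setOf_eq, Set.mem_inter_iff, Set.mem_union, Set.mem_compl_iff,
      Set.mem_setOf_eq]
    tauto
  rw [this]
  exact hB.inter (((hA u).inter (hA v).compl).union ((hA u).compl.inter (hA v)))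

lemma Dset_subset_closedBall (u v : EuclideanSpace ℝ (Fin d)) :
    Dset u v ⊆ closedBall (0 : EuclideanSpace ℝ (Fin d)) 1 := fun x hx => by
  rw [mem_closedBall_zero_iff]; exact hx.1

lemma Dset_smul {u v : EuclideanSpace ℝ (Fin d)} {a b : ℝ} (ha : 0 < a) (hb : 0 < b) :
    Dset (a • u) (b • v) = Dset u v := by
  ext x
  simp only [Dset, Set.mem_setOf_eq, real_inner_smul_left]
  rw [mul_pos_iff_of_pos_left ha, mul_pos_iff_of_pos_left hb]

lemma Dset_self (u : EuclideanSpace ℝ (Fin d)) : Dset u u = ∅ := by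
  ext x; simp [Dset]

lemma volume_hyperplane {u : EuclideanSpace ℝ (Fin d)} (hu : u ≠ 0) :
    volume {x : EuclideanSpace ℝ (Fin d) | ⟪u, x⟫ = 0} = 0 := by
  have hker : {x : EuclideanSpace ℝ (Fin d) | ⟪u, x⟫ = 0}
      = (LinearMap.ker (innerSL ℝ u).toLinearMap : Set (EuclideanSpace ℝ (Fin d))) := by
    ext x
    simp [LinearMap.mem_ker]
  rw [hker]
  refine Measure.addHaar_submodule _ _ ?_
  intro htop
  have hmem : u ∈ LinearMap.ker (innerSL ℝ u).toLinearMap := htop ▸ Submodule.mem_top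
  have : ⟪u, u⟫ = 0 := hmem
  exact hu (inner_self_eq_zero.mp this)


/-- Triangle inclusion: pure logic. -/
lemma Dset_subset_union (u v w : EuclideanSpace ℝ (Fin d)) :
    Dset u v ⊆ Dset u w ∪ Dset w v := by
  intro x hx
  by_cases h1 : ((0:ℝ) < ⟪u, x⟫) ↔ ((0:ℝ) < ⟪w, x⟫)
  · exact Or.inr ⟨hx.1, fun h2 => hx.2 (h1.trans h2)⟩
  · exact Or.inl ⟨hx.1, h1⟩

/-- Exact splitting when `w` is in the open positive cone of `u, v`. -/
lemma volume_Dset_between {u v w : EuclideanSpace ℝ (Fin d)} {a b : ℝ}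
    (ha : 0 < a) (hb : 0 < b) (hw : w = a • u + b • v) :
    volume (Dset u v) = volume (Dset u w) + volume (Dset w v) := by
  have hwx : ∀ x : EuclideanSpace ℝ (Fin d), ⟪w, x⟫ = a * ⟪u, x⟫ + b * ⟪v, x⟫ := by
    intro x; rw [hw, inner_add_left, real_inner_smul_left, real_inner_smul_left]
  have hset : Dset u v = Dset u w ∪ Dset w v := by
    refine subset_antisymm (Dset_subset_union u v w) ?_
    rintro x (⟨hx1, hx2⟩ | ⟨hx1, hx2⟩) <;> refine ⟨hx1, fun hiff => hx2 ?_⟩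
    · constructor
      · intro hu'
        have hv' := hiff.mp hu'
        rw [hwx]; positivity
      · intro hw'
        by_contra hu'
        have hv' : ¬ ((0:ℝ) < ⟪v, x⟫) := fun h => hu' (hiff.mpr h)
        rw [hwx] at hw'
        push_neg at hu' hv'
        nlinarith
    · constructor
      · intro hw'
        by_contra hv'
        have hu' : ¬ ((0:ℝ) < ⟪u, x⟫) := fun h => hv' (hiff.mp h)
        rw [hwx] at hw'
        push_neg at hu' hv'
        nlinarith
      · intro hv'
        have hu' := hiff.mpr hv'
        rw [hwx]; positivity
  have hdisj : Disjoint (Dset u w) (Dset w v) := by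
    rw [Set.disjoint_left]
    rintro x ⟨hx1, hx2⟩ ⟨_, hy2⟩
    by_cases hu' : (0:ℝ) < ⟪u, x⟫
    · have hw' : ¬ ((0:ℝ) < ⟪w, x⟫) := fun h => hx2 ⟨fun _ => h, fun _ => hu'⟩
      have hv' : (0:ℝ) < ⟪v, x⟫ := by
        by_contra hv'
        exact hy2 ⟨fun h => absurd h hw', fun h => absurd h hv'⟩
      exact hw' (by rw [hwx]; positivity)
    · have hw' : (0:ℝ) < ⟪w, x⟫ := by
        by_contra hw'
        exact hx2 ⟨fun h => absurd h hu', fun h => absurd h hw'⟩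
      have hv' : ¬ ((0:ℝ) < ⟪v, x⟫) := fun h => hy2 ⟨fun _ => h, fun _ => hw'⟩
      push_neg at hu' hv'
      rw [hwx] at hw'
      nlinarith
  rw [hset, measure_union hdisj (measurableSet_Dset _ _)]

/-- Splitting at the antipodal endpoint, valid modulo a hyperplane. -/
lemma volume_Dset_endpoint {u : EuclideanSpace ℝ (Fin d)} (hu : u ≠ 0)
    (w : EuclideanSpace ℝ (Fin d)) :
    volume (Dset u (-u)) = volume (Dset u w) + volume (Dset w (-u)) := by
  set H := {x : EuclideanSpace ℝ (Fin d) | ⟪u, x⟫ = 0} with hH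
  have hHnull : volume H = 0 := volume_hyperplane hu
  have hinn : ∀ x : EuclideanSpace ℝ (Fin d), ⟪-u, x⟫ = -⟪u, x⟫ := fun x => inner_neg_left u x
  -- membership in Dset u (-u) given nonzero inner and ball
  have hmem : ∀ x : EuclideanSpace ℝ (Fin d), ‖x‖ ≤ 1 → ⟪u, x⟫ ≠ 0 → x ∈ Dset u (-u) := by
    intro x hx h0
    refine ⟨hx, fun hiff => ?_⟩
    rcases lt_trichotomy (0:ℝ) ⟪u, x⟫ with h | h | h
    · have := hiff.mp h; rw [hinn] at this; linarith
    · exact h0 h.symm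
    · have := hiff.mpr (by rw [hinn]; linarith); linarith
  have h2 : Dset u w ∪ Dset w (-u) ⊆ Dset u (-u) ∪ H := by
    rintro x (⟨hx1, _⟩ | ⟨hx1, _⟩) <;>
    · by_cases h0 : ⟪u, x⟫ = 0
      · exact Or.inr h0
      · exact Or.inl (hmem x hx1 h0)
  have h3 : Dset u w ∩ Dset w (-u) ⊆ H := by
    rintro x ⟨⟨_, hx2⟩, ⟨_, hy2⟩⟩
    by_contra h0
    rcases lt_trichotomy (0:ℝ) ⟪u, x⟫ with h | h | h
    · have hw' : ¬ ((0:ℝ) < ⟪w, x⟫) := fun hww => hx2 ⟨fun _ => hww, fun _ => h⟩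
      have : (0:ℝ) < ⟪-u, x⟫ := by
        by_contra hnu
        exact hy2 ⟨fun hh => absurd hh hw', fun hh => absurd hh hnu⟩
      rw [hinn] at this; linarith
    · exact h0 h.symm
    · have hw' : (0:ℝ) < ⟪w, x⟫ := by
        by_contra hww
        exact hx2 ⟨fun hh => absurd hh (by linarith : ¬ ((0:ℝ) < ⟪u, x⟫)), fun hh => absurd hh hww⟩
      have hnu : (0:ℝ) < ⟪-u, x⟫ := by rw [hinn]; linarith
      exact hy2 ⟨fun _ => hnu, fun _ => hw'⟩ |>.elim
  refine le_antisymm ?_ ?_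
  · calc volume (Dset u (-u)) ≤ volume (Dset u w ∪ Dset w (-u)) :=
          measure_mono (Dset_subset_union u (-u) w)
    _ ≤ volume (Dset u w) + volume (Dset w (-u)) := measure_union_le _ _
  · have key := measure_union_add_inter (μ := volume) (Dset u w) (measurableSet_Dset w (-u))
    have e1 : volume (Dset u w ∪ Dset w (-u)) ≤ volume (Dset u (-u)) := by
      calc volume (Dset u w ∪ Dset w (-u)) ≤ volume (Dset u (-u) ∪ H) := measure_mono h2
      _ ≤ volume (Dset u (-u)) + volume H := measure_union_le _ _
      _ = volume (Dset u (-u)) := by rw [hHnull, add_zero]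
    have e2 : volume (Dset u w ∩ Dset w (-u)) = 0 :=
      le_antisymm (hHnull ▸ measure_mono h3) zero_le
    calc volume (Dset u w) + volume (Dset w (-u))
        = volume (Dset u w ∪ Dset w (-u)) + volume (Dset u w ∩ Dset w (-u)) := key.symm
      _ = volume (Dset u w ∪ Dset w (-u)) := by rw [e2, add_zero]
      _ ≤ volume (Dset u (-u)) := e1

lemma exists_unit_ortho (hd : 2 ≤ d) {u : EuclideanSpace ℝ (Fin d)} (hu : u ≠ 0) :
    ∃ w : EuclideanSpace ℝ (Fin d), ‖w‖ = 1 ∧ ⟪u, w⟫ = 0 := by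
  have hne : (Submodule.span ℝ {u})ᗮ ≠ ⊥ := by
    intro hbot
    have htop : Submodule.span ℝ {u} = ⊤ := Submodule.orthogonal_eq_bot_iff.mp hbot
    have h1 : Module.finrank ℝ (⊤ : Submodule ℝ (EuclideanSpace ℝ (Fin d))) = 1 :=
      htop ▸ finrank_span_singleton hu
    rw [finrank_top, finrank_euclideanSpace, Fintype.card_fin] at h1
    omega
  obtain ⟨w0, hw0mem, hw0ne⟩ := Submodule.exists_mem_ne_zero_of_ne_bot hne
  refine ⟨(‖w0‖ : ℝ)⁻¹ • w0, norm_smul_inv_norm hw0ne, ?_⟩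
  rw [real_inner_smul_right]
  have : ⟪u, w0⟫ = 0 := by
    have := (Submodule.mem_orthogonal _ _).mp hw0mem u (Submodule.mem_span_singleton_self u)
    simpa [real_inner_comm] using this
  rw [this, mul_zero]

lemma exists_ortho (hd : 2 ≤ d) {u v : EuclideanSpace ℝ (Fin d)}
    (hu : ‖u‖ = 1) (hv : ‖v‖ = 1) :
    ∃ w : EuclideanSpace ℝ (Fin d), ‖w‖ = 1 ∧ ⟪u, w⟫ = 0 ∧
      v = ⟪u, v⟫ • u + Real.sqrt (1 - ⟪u, v⟫ ^ 2) • w := by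
  set a : ℝ := ⟪u, v⟫ with ha
  have hune : u ≠ 0 := by intro h; rw [h, norm_zero] at hu; norm_num at hu
  have ha1 : a ^ 2 ≤ 1 := by
    have := abs_real_inner_le_norm u v
    rw [hu, hv, mul_one] at this
    nlinarith [abs_nonneg a, le_abs_self a, neg_abs_le a]
  have hz2 : ‖v - a • u‖ ^ 2 = 1 - a ^ 2 := by
    rw [norm_sub_sq_real, real_inner_smul_right, real_inner_comm u v, ← ha, norm_smul, hu, hv,
      Real.norm_eq_abs, mul_one, sq_abs]
    ring
  by_cases h0 : v - a • u = 0
  · obtain ⟨w, hw1, hw2⟩ := exists_unit_ortho hd hune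
    have ha2 : 1 - a ^ 2 = 0 := by
      rw [← hz2, h0, norm_zero]; ring
    refine ⟨w, hw1, hw2, ?_⟩
    rw [ha2, Real.sqrt_zero, zero_smul, add_zero, ← sub_eq_zero]
    exact h0
  · set z := v - a • u with hzdef
    have hzpos : 0 < ‖z‖ := norm_pos_iff.mpr h0
    have hznorm : ‖z‖ = Real.sqrt (1 - a ^ 2) := by
      rw [← Real.sqrt_sq (norm_nonneg z), hz2]
    refine ⟨(‖z‖ : ℝ)⁻¹ • z, norm_smul_inv_norm h0, ?_, ?_⟩
    · rw [real_inner_smul_right]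
      have : ⟪u, z⟫ = 0 := by
        rw [hzdef, inner_sub_right, real_inner_smul_right, real_inner_self_eq_norm_sq, hu]
        ring
      rw [this, mul_zero]
    · rw [← hznorm, smul_smul, mul_inv_cancel₀ (ne_of_gt hzpos), one_smul, hzdef]
      abel

lemma exists_isometry (hd : 2 ≤ d) {u v u' v' : EuclideanSpace ℝ (Fin d)}
    (hu : ‖u‖ = 1) (hv : ‖v‖ = 1) (hu' : ‖u'‖ = 1) (hv' : ‖v'‖ = 1)
    (h : ⟪u, v⟫ = ⟪u', v'⟫) :
    ∃ T : EuclideanSpace ℝ (Fin d) ≃ₗᵢ[ℝ] EuclideanSpace ℝ (Fin d), T u = u' ∧ T v = v' := by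
  obtain ⟨w, hw1, hw2, hw3⟩ := exists_ortho hd hu hv
  obtain ⟨w', hw1', hw2', hw3'⟩ := exists_ortho hd hu' hv'
  have hcard : Module.finrank ℝ (EuclideanSpace ℝ (Fin d)) = Fintype.card (Fin d) :=
    finrank_euclideanSpace
  set i0 : Fin d := ⟨0, by omega⟩ with hi0
  set i1 : Fin d := ⟨1, by omega⟩ with hi1
  have hne : i0 ≠ i1 := by simp [hi0, hi1, Fin.ext_iff]
  -- build the two orthonormal bases
  have build : ∀ (p q : EuclideanSpace ℝ (Fin d)), ‖p‖ = 1 → ‖q‖ = 1 → ⟪p, q⟫ = 0 →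
      ∃ b : OrthonormalBasis (Fin d) ℝ (EuclideanSpace ℝ (Fin d)), b i0 = p ∧ b i1 = q := by
    intro p q hp hq hpq
    set f : Fin d → EuclideanSpace ℝ (Fin d) := fun i => if i = i0 then p else q with hf
    have horth : Orthonormal ℝ (({i0, i1} : Set (Fin d)).restrict f) := by
      constructor
      · rintro ⟨i, hi⟩
        have hi' : i = i0 ∨ i = i1 := hi
        rcases hi' with rfl | rfl
        · simpa [hf, Set.restrict] using hp
        · simp only [Set.restrict, Set.restrict_apply, hf]
          rw [if_neg hne.symm]
          exact hq
      · rintro ⟨i, hi⟩ ⟨j, hj⟩ hij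
        have hij' : i ≠ j := fun hh => hij (Subtype.ext hh)
        simp only [Set.restrict, Set.restrict_apply, hf]
        have hi' : i = i0 ∨ i = i1 := hi
        have hj' : j = i0 ∨ j = i1 := hj
        rcases hi' with rfl | rfl <;> rcases hj' with rfl | rfl
        · exact absurd rfl hij'
        · rw [if_pos rfl, if_neg hne.symm]; exact hpq
        · rw [if_pos rfl, if_neg hne.symm]; rw [real_inner_comm]; exact hpq
        · exact absurd rfl hij'
    obtain ⟨b, hb⟩ := horth.exists_orthonormalBasis_extension_of_card_eq hcard
    refine ⟨b, ?_, ?_⟩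
    · rw [hb i0 (by simp)]; simp [hf]
    · rw [hb i1 (by simp)]; simp only [hf]; rw [if_neg hne.symm]
  obtain ⟨b, hb0, hb1⟩ := build u w hu hw1 hw2
  obtain ⟨b', hb0', hb1'⟩ := build u' w' hu' hw1' hw2'
  refine ⟨b.repr.trans b'.repr.symm, ?_, ?_⟩
  · show b'.repr.symm (b.repr u) = u'
    rw [← hb0, b.repr_self, OrthonormalBasis.repr_symm_single, hb0']
  · show b'.repr.symm (b.repr v) = v'
    have e1 : b'.repr.symm (b.repr u) = u' := by
      rw [← hb0, b.repr_self, OrthonormalBasis.repr_symm_single, hb0']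
    have e2 : b'.repr.symm (b.repr w) = w' := by
      rw [← hb1, b.repr_self, OrthonormalBasis.repr_symm_single, hb1']
    rw [hw3, hw3']
    simp only [map_add, _root_.map_smul]
    rw [e1, e2, h]

lemma volume_Dset_congr (hd : 2 ≤ d) {u v u' v' : EuclideanSpace ℝ (Fin d)}
    (hu : ‖u‖ = 1) (hv : ‖v‖ = 1) (hu' : ‖u'‖ = 1) (hv' : ‖v'‖ = 1)
    (h : ⟪u, v⟫ = ⟪u', v'⟫) :
    volume (Dset u v) = volume (Dset u' v') := by
  obtain ⟨T, hTu, hTv⟩ := exists_isometry hd hu hv hu' hv' h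
  have hpre : Dset u v = T ⁻¹' (Dset u' v') := by
    ext x
    simp only [Dset, Set.mem_preimage, Set.mem_setOf_eq]
    rw [T.norm_map, ← hTu, ← hTv, T.inner_map_map, T.inner_map_map]
  rw [hpre, T.measurePreserving.measure_preimage (measurableSet_Dset u' v').nullMeasurableSet]

noncomputable def vv (e f : EuclideanSpace ℝ (Fin d)) (t : ℝ) : EuclideanSpace ℝ (Fin d) :=
  Real.cos t • e + Real.sin t • f

lemma inner_vv {e f : EuclideanSpace ℝ (Fin d)} (he : ‖e‖ = 1) (hf : ‖f‖ = 1)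
    (hef : ⟪e, f⟫ = 0) (s t : ℝ) : ⟪vv e f s, vv e f t⟫ = Real.cos (s - t) := by
  have hfe : ⟪f, e⟫ = 0 := (real_inner_comm e f).trans hef
  simp only [vv, inner_add_left, inner_add_right, real_inner_smul_left, real_inner_smul_right,
    real_inner_self_eq_norm_sq, he, hf, hef, hfe]
  rw [Real.cos_sub]; ring

lemma norm_vv {e f : EuclideanSpace ℝ (Fin d)} (he : ‖e‖ = 1) (hf : ‖f‖ = 1)
    (hef : ⟪e, f⟫ = 0) (t : ℝ) : ‖vv e f t‖ = 1 := by
  have h := inner_vv he hf hef t t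
  rw [sub_self, Real.cos_zero, real_inner_self_eq_norm_sq] at h
  nlinarith [norm_nonneg (vv e f t)]

lemma vv_zero (e f : EuclideanSpace ℝ (Fin d)) : vv e f 0 = e := by
  simp [vv]

lemma inner_vv_left {e f : EuclideanSpace ℝ (Fin d)} (he : ‖e‖ = 1) (hf : ‖f‖ = 1)
    (hef : ⟪e, f⟫ = 0) (s : ℝ) : ⟪e, vv e f s⟫ = Real.cos s := by
  have h := inner_vv he hf hef 0 s
  rw [vv_zero] at h
  rw [h, zero_sub, Real.cos_neg]

lemma vv_pi (e f : EuclideanSpace ℝ (Fin d)) : vv e f Real.pi = -e := by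
  simp [vv]

lemma key (hd : 2 ≤ d) {e f : EuclideanSpace ℝ (Fin d)} (he : ‖e‖ = 1) (hf : ‖f‖ = 1)
    (hef : ⟪e, f⟫ = 0) {t : ℝ} (ht0 : 0 ≤ t) (htpi : t ≤ Real.pi) :
    (volume (Dset e (vv e f t))).toReal
      = t / Real.pi * (volume (closedBall (0 : EuclideanSpace ℝ (Fin d)) 1)).toReal := by
  have he0 : e ≠ 0 := by intro h; rw [h, norm_zero] at he; norm_num at he
  have hπ := Real.pi_pos
  set g : ℝ → ℝ≥0∞ := fun s => volume (Dset (vv e f 0) (vv e f s)) with hg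
  have hshift : ∀ s u : ℝ, volume (Dset (vv e f s) (vv e f u)) = g (u - s) := by
    intro s u
    refine volume_Dset_congr hd (norm_vv he hf hef s) (norm_vv he hf hef u)
      (norm_vv he hf hef 0) (norm_vv he hf hef (u - s)) ?_
    rw [inner_vv he hf hef, inner_vv he hf hef]
    congr 1; ring
  have hg_fin : ∀ s, g s ≠ ⊤ := fun s =>
    ((measure_mono (Dset_subset_closedBall _ _)).trans_lt measure_closedBall_lt_top).ne
  have hg0 : g 0 = 0 := by
    rw [hg]; simp only [Dset_self, measure_empty]
  have hgpi : g Real.pi = volume (closedBall (0 : EuclideanSpace ℝ (Fin d)) 1) := by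
    rw [hg]
    simp only [vv_zero, vv_pi]
    refine le_antisymm (measure_mono (Dset_subset_closedBall _ _)) ?_
    have hcover : closedBall (0 : EuclideanSpace ℝ (Fin d)) 1 ⊆
        Dset e (-e) ∪ {x : EuclideanSpace ℝ (Fin d) | ⟪e, x⟫ = 0} := by
      intro x hx
      rw [mem_closedBall_zero_iff] at hx
      by_cases h0 : ⟪e, x⟫ = 0
      · exact Or.inr h0
      · refine Or.inl ⟨hx, fun hiff => ?_⟩
        rw [inner_neg_left] at hiff
        rcases lt_trichotomy (0:ℝ) ⟪e, x⟫ with h | h | h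
        · have := hiff.mp h; linarith
        · exact h0 h.symm
        · have := hiff.mpr (by linarith); linarith
    calc volume (closedBall (0 : EuclideanSpace ℝ (Fin d)) 1)
        ≤ volume (Dset e (-e) ∪ {x : EuclideanSpace ℝ (Fin d) | ⟪e, x⟫ = 0}) :=
          measure_mono hcover
      _ ≤ volume (Dset e (-e)) + volume {x : EuclideanSpace ℝ (Fin d) | ⟪e, x⟫ = 0} :=
          measure_union_le _ _
      _ = volume (Dset e (-e)) := by rw [volume_hyperplane he0, add_zero]
  have A1 : ∀ s u : ℝ, 0 < s → s < u → u < Real.pi → g u = g s + g (u - s) := by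
    intro s u hs hsu hu
    have hsinu : (0:ℝ) < Real.sin u := Real.sin_pos_of_pos_of_lt_pi (hs.trans hsu) hu
    have hsins : (0:ℝ) < Real.sin s := Real.sin_pos_of_pos_of_lt_pi hs (hsu.trans hu)
    have hsinus : (0:ℝ) < Real.sin (u - s) :=
      Real.sin_pos_of_pos_of_lt_pi (by linarith) (by linarith)
    set A := Real.sin (u - s) / Real.sin u with hA
    set B := Real.sin s / Real.sin u with hB
    have hApos : 0 < A := div_pos hsinus hsinu
    have hBpos : 0 < B := div_pos hsins hsinu
    have h1 : A * Real.cos 0 + B * Real.cos u = Real.cos s := by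
      rw [Real.cos_zero, hA, hB]
      field_simp
      rw [Real.sin_sub]; ring
    have h2 : A * Real.sin 0 + B * Real.sin u = Real.sin s := by
      rw [Real.sin_zero, hA, hB]
      field_simp
      ring
    have hw : vv e f s = A • vv e f 0 + B • vv e f u := by
      have : A • vv e f 0 + B • vv e f u
          = (A * Real.cos 0 + B * Real.cos u) • e + (A * Real.sin 0 + B * Real.sin u) • f := by
        simp only [vv]; module
      rw [this, h1, h2]; rfl
    have := volume_Dset_between hApos hBpos hw
    rw [hshift s u] at this
    exact this
  have A2 : ∀ s : ℝ, 0 < s → s < Real.pi → g Real.pi = g s + g (Real.pi - s) := by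
    intro s hs hsπ
    have h1 : g Real.pi = volume (Dset e (-e)) := by rw [hg]; simp only [vv_zero, vv_pi]
    have h2 := volume_Dset_endpoint he0 (vv e f s)
    have h3 : volume (Dset e (vv e f s)) = g s := by rw [hg, vv_zero]
    have h4 : volume (Dset (vv e f s) (-e)) = g (Real.pi - s) := by
      rw [← vv_pi e f, hshift]
    rw [h1, h2, h3, h4]
  -- pass to real numbers
  set c : ℝ := (volume (closedBall (0 : EuclideanSpace ℝ (Fin d)) 1)).toReal with hc
  set G : ℝ → ℝ := fun s => (g s).toReal with hG
  have hGpi : G Real.pi = c := by rw [hG]; simp only [hgpi, hc]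
  have hG0 : G 0 = 0 := by rw [hG]; simp only [hg0, ENNReal.toReal_zero]
  have hGnn : ∀ s, 0 ≤ G s := fun s => ENNReal.toReal_nonneg
  have hcnn : 0 ≤ c := ENNReal.toReal_nonneg
  have Gadd : ∀ s u : ℝ, 0 ≤ s → 0 ≤ u → s + u ≤ Real.pi → G (s + u) = G s + G u := by
    intro s u hs hu hsu
    rcases hs.eq_or_lt with h | hs'
    · rw [← h, zero_add, hG0, zero_add]
    rcases hu.eq_or_lt with h | hu'
    · rw [← h, add_zero, hG0, add_zero]
    rcases hsu.lt_or_eq with h | h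
    · have := A1 s (s + u) hs' (by linarith) h
      have he' : s + u - s = u := by ring
      rw [he'] at this
      rw [hG]; simp only [this]
      exact ENNReal.toReal_add (hg_fin s) (hg_fin u)
    · have := A2 s hs' (by linarith)
      have he' : Real.pi - s = u := by linarith
      rw [he'] at this
      rw [h, hG]; simp only [this]
      exact ENNReal.toReal_add (hg_fin s) (hg_fin u)
  have Gmul : ∀ (n : ℕ) (x : ℝ), 0 ≤ x → (n : ℝ) * x ≤ Real.pi → G ((n : ℝ) * x) = n * G x := by
    intro n
    induction n with
    | zero => intro x _ _; simp [hG0]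
    | succ n ih =>
      intro x hx hbound
      have hcast : ((n + 1 : ℕ) : ℝ) = (n : ℝ) + 1 := by push_cast; ring
      have hnx : (n : ℝ) * x ≤ Real.pi := by
        rw [hcast] at hbound; nlinarith
      have h1 : ((n : ℝ) + 1) * x = (n : ℝ) * x + x := by ring
      rw [hcast, h1, Gadd ((n:ℝ) * x) x (by positivity) hx (by rw [← h1, ← hcast]; exact hbound),
        ih x hx hnx]
      ring
  have Gmono : ∀ s u : ℝ, 0 ≤ s → s ≤ u → u ≤ Real.pi → G s ≤ G u := by
    intro s u hs hsu hu
    have := Gadd s (u - s) hs (by linarith) (by linarith)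
    have h' : s + (u - s) = u := by ring
    rw [h'] at this
    rw [this]
    linarith [hGnn (u - s)]
  have Grat : ∀ p q : ℕ, 0 < q → p ≤ q → G (((p : ℝ) / q) * Real.pi) = ((p : ℝ) / q) * c := by
    intro p q hq hpq
    have hqR : (0:ℝ) < q := by exact_mod_cast hq
    have hpiq : (0:ℝ) ≤ Real.pi / q := by positivity
    have hqpi : (q : ℝ) * (Real.pi / q) = Real.pi := by field_simp
    have h1 : G Real.pi = q * G (Real.pi / q) := by
      have := Gmul q (Real.pi / q) hpiq (le_of_eq hqpi)
      rw [hqpi] at this; exact this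
    have hpq' : (p : ℝ) ≤ q := by exact_mod_cast hpq
    have h2 : (p : ℝ) * (Real.pi / q) ≤ Real.pi :=
      (mul_le_mul_of_nonneg_right hpq' hpiq).trans (le_of_eq hqpi)
    have h3 := Gmul p (Real.pi / q) hpiq h2
    have h4 : (p : ℝ) * (Real.pi / q) = ((p : ℝ) / q) * Real.pi := by ring
    rw [h4] at h3
    rw [h3]
    have hGq : G (Real.pi / q) = c / q := by
      rw [hGpi] at h1
      field_simp at h1 ⊢
      linarith
    rw [hGq]; ring
  -- the squeeze
  have hgoal : G t = t / Real.pi * c := by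
    refine le_antisymm ?_ ?_
    · by_contra hlt
      push_neg at hlt
      have hGt : 0 < G t := lt_of_le_of_lt (by positivity) hlt
      have hGtc : G t ≤ c := by rw [← hGpi]; exact Gmono t Real.pi ht0 htpi le_rfl
      have hcpos : 0 < c := lt_of_lt_of_le hGt hGtc
      have h1 : t / Real.pi < G t / c := (lt_div_iff₀ hcpos).mpr hlt
      obtain ⟨r, hr1, hr2⟩ := exists_rat_btwn h1
      have hr0 : (0:ℝ) < r := lt_of_le_of_lt (by positivity) hr1
      have hrle1 : (r:ℝ) ≤ 1 :=
        le_of_lt (lt_of_lt_of_le hr2 (by rw [div_le_one hcpos]; exact hGtc))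
      have hnum : (0:ℤ) < r.num := Rat.num_pos.mpr (by exact_mod_cast hr0)
      set p : ℕ := r.num.toNat with hp
      have hpnum : (p : ℝ) = (r.num : ℝ) := by
        rw [hp]; exact_mod_cast Int.toNat_of_nonneg hnum.le
      have hrpq : (r : ℝ) = (p : ℝ) / r.den := by rw [hpnum, Rat.cast_def]
      have hpq : p ≤ r.den := by
        have hd0 : (0:ℝ) < r.den := by exact_mod_cast r.pos
        have : (p : ℝ) ≤ r.den := by
          rw [hrpq, div_le_one hd0] at hrle1; exact hrle1
        exact_mod_cast this
      have hGr := Grat p r.den r.pos hpq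
      rw [← hrpq] at hGr
      have hmono := Gmono t ((r:ℝ) * Real.pi) ht0
        (le_of_lt ((div_lt_iff₀ hπ).mp hr1))
        (by nlinarith)
      rw [hGr] at hmono
      have : (r:ℝ) * c < G t := (lt_div_iff₀ hcpos).mp hr2
      linarith
    · by_contra hlt
      push_neg at hlt
      have h0 : 0 < t / Real.pi * c := lt_of_le_of_lt (hGnn t) hlt
      have hcpos : 0 < c := by
        rcases hcnn.eq_or_lt with h | h
        · rw [← h, mul_zero] at h0; linarith
        · exact h
      have h1 : G t / c < t / Real.pi := (div_lt_iff₀ hcpos).mpr hlt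
      obtain ⟨r, hr1, hr2⟩ := exists_rat_btwn h1
      have hr0 : (0:ℝ) ≤ r := le_of_lt (lt_of_le_of_lt (by positivity) hr1)
      have hrle1 : (r:ℝ) ≤ 1 :=
        le_of_lt (lt_of_lt_of_le hr2 (by rw [div_le_one hπ]; exact htpi))
      have hnum : (0:ℤ) ≤ r.num := Rat.num_nonneg.mpr (by exact_mod_cast hr0)
      set p : ℕ := r.num.toNat with hp
      have hpnum : (p : ℝ) = (r.num : ℝ) := by
        rw [hp]; exact_mod_cast Int.toNat_of_nonneg hnum
      have hrpq : (r : ℝ) = (p : ℝ) / r.den := by rw [hpnum, Rat.cast_def]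
      have hpq : p ≤ r.den := by
        have hd0 : (0:ℝ) < r.den := by exact_mod_cast r.pos
        have : (p : ℝ) ≤ r.den := by
          rw [hrpq, div_le_one hd0] at hrle1; exact hrle1
        exact_mod_cast this
      have hGr := Grat p r.den r.pos hpq
      rw [← hrpq] at hGr
      have hmono := Gmono ((r:ℝ) * Real.pi) t (by positivity)
        (le_of_lt ((lt_div_iff₀ hπ).mp hr2)) htpi
      rw [hGr] at hmono
      have : G t < (r:ℝ) * c := (div_lt_iff₀ hcpos).mp hr1
      linarith
  have hfin : (volume (Dset e (vv e f t))).toReal = G t := by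
    rw [hG, hg, vv_zero]
  rw [hfin, hgoal]

end Stmt10Aux

open MeasureTheory Stmt10Aux
open scoped RealInnerProductSpace

/-- For linear threshold classifiers `h_θ(x) = 1[⟨θ,x⟩ > 0]` with nonzero `θ₁, θ₂`
at angle `φ`, the disagreement region inside the unit ball has Lebesgue measure
`(φ/π)·V_d` where `V_d` is the volume of the unit ball. -/
theorem stmt10 {d : ℕ} (hd : 2 ≤ d) (θ₁ θ₂ : EuclideanSpace ℝ (Fin d))
    (h₁ : θ₁ ≠ 0) (h₂ : θ₂ ≠ 0) :
    (volume {x : EuclideanSpace ℝ (Fin d) | ‖x‖ ≤ 1 ∧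
        ¬(((0:ℝ) < (inner ℝ θ₁ x : ℝ)) ↔ ((0:ℝ) < (inner ℝ θ₂ x : ℝ)))}).toReal
      = (InnerProductGeometry.angle θ₁ θ₂ / Real.pi) *
        (volume (Metric.closedBall (0 : EuclideanSpace ℝ (Fin d)) 1)).toReal := by
  set φ := InnerProductGeometry.angle θ₁ θ₂ with hφ
  have hφ0 : 0 ≤ φ := InnerProductGeometry.angle_nonneg θ₁ θ₂
  have hφπ : φ ≤ Real.pi := InnerProductGeometry.angle_le_pi θ₁ θ₂
  have hn1 : (0:ℝ) < ‖θ₁‖ := norm_pos_iff.mpr h₁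
  have hn2 : (0:ℝ) < ‖θ₂‖ := norm_pos_iff.mpr h₂
  set u₁ : EuclideanSpace ℝ (Fin d) := (‖θ₁‖ : ℝ)⁻¹ • θ₁ with hu₁def
  set u₂ : EuclideanSpace ℝ (Fin d) := (‖θ₂‖ : ℝ)⁻¹ • θ₂ with hu₂def
  have hu₁ : ‖u₁‖ = 1 := norm_smul_inv_norm h₁
  have hu₂ : ‖u₂‖ = 1 := norm_smul_inv_norm h₂
  have hu₁0 : u₁ ≠ 0 := by intro h; rw [h, norm_zero] at hu₁; norm_num at hu₁
  have hsets : {x : EuclideanSpace ℝ (Fin d) | ‖x‖ ≤ 1 ∧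
      ¬(((0:ℝ) < (inner ℝ θ₁ x : ℝ)) ↔ ((0:ℝ) < (inner ℝ θ₂ x : ℝ)))} = Dset θ₁ θ₂ := rfl
  have h1 : volume (Dset θ₁ θ₂) = volume (Dset u₁ u₂) := by
    rw [hu₁def, hu₂def, Dset_smul (inv_pos.mpr hn1) (inv_pos.mpr hn2)]
  obtain ⟨f, hf1, hf2⟩ := exists_unit_ortho hd hu₁0
  have hinner : ⟪u₁, u₂⟫ = Real.cos φ := by
    rw [hφ, InnerProductGeometry.cos_angle, hu₁def, hu₂def, real_inner_smul_left,
      real_inner_smul_right]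
    field_simp
  have hinner2 : ⟪u₁, vv u₁ f φ⟫ = Real.cos φ := inner_vv_left hu₁ hf1 hf2 φ
  have h2 : volume (Dset u₁ u₂) = volume (Dset u₁ (vv u₁ f φ)) :=
    volume_Dset_congr hd hu₁ hu₂ hu₁ (norm_vv hu₁ hf1 hf2 φ) (by rw [hinner, hinner2])
  rw [hsets, h1, h2]
  exact key hd hu₁ hf1 hf2 hφ0 hφπ
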